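/- With the same quandle R_3, group Z_3 = ⟨t⟩, and 3-cocycle θ as before, the mirror state-sum Φ'(θ) = Σ_{(y₁,y₂)} θ(y₂, y₁*y₂, y₁)⁻¹·θ(y₂, y₁, y₂)⁻¹·θ(y₁, y₂, y₁*y₂)⁻¹·θ(y₁*y₂, y₂, y₁)·θ(y₂, y₁*y₂, y₂)·θ(y₁*y₂, y₁, y₂), summed over all pairs (y₁,y₂) ∈ R_3², equals 3 + 6t². In particular Φ(θ) = 3 + 6t ≠ 3 + 6t² = Φ'(θ) in Z[t]/(t³−1). -/

import Mathlib

/-- The dihedral quandle `R₃` operation on `ZMod 3`: `i * j = 2j − i`. -/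
def r3op (i j : ZMod 3) : ZMod 3 := 2 * j - i

/-- Characteristic function `χ_{(a,b,c)}` on `R₃³`, valued in `ℤ₃`. -/
def chi3 (a b c p q r : ZMod 3) : ZMod 3 :=
  if p = a ∧ q = b ∧ r = c then 1 else 0

/-- The exponent of the 3-cocycle:
`−χ_{(0,1,0)} + χ_{(0,2,0)} − χ_{(0,2,1)} + χ_{(1,0,1)} + χ_{(1,0,2)}
 + χ_{(2,0,2)} + χ_{(2,1,2)}`. -/
def thetaExp (p q r : ZMod 3) : ZMod 3 :=
  -chi3 0 1 0 p q r + chi3 0 2 0 p q r - chi3 0 2 1 p q r +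
    chi3 1 0 1 p q r + chi3 1 0 2 p q r + chi3 2 0 2 p q r +
    chi3 2 1 2 p q r

/-- The 3-cocycle `θ = t^(thetaExp)`, valued in `ℤ₃ = ⟨t⟩` written
multiplicatively. -/
def theta (p q r : ZMod 3) : Multiplicative (ZMod 3) :=
  Multiplicative.ofAdd (thetaExp p q r)

/-- State-sum weight for the 2-twist spun trefoil. -/
def weight (y : ZMod 3 × ZMod 3) : Multiplicative (ZMod 3) :=
  theta (r3op y.1 y.2) y.1 y.2 * theta (r3op y.1 y.2) y.2 (r3op y.1 y.2) *
    theta y.2 (r3op y.1 y.2) y.1 * (theta y.1 (r3op y.1 y.2) y.2)⁻¹ *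
    (theta (r3op y.1 y.2) y.1 (r3op y.1 y.2))⁻¹ *
    (theta y.1 y.2 (r3op y.1 y.2))⁻¹

/-- The state-sum `Φ(θ)` of the 2-twist spun trefoil, in `ℤ[ℤ₃]`. -/
noncomputable def stateSum : MonoidAlgebra ℤ (Multiplicative (ZMod 3)) :=
  ∑ y ∈ Finset.univ.filter
      (fun y : ZMod 3 × ZMod 3 =>
        y.2 = r3op (r3op y.1 y.2) y.1 ∧ y.2 = r3op (r3op y.2 y.1) y.1),
    MonoidAlgebra.single (weight y) (1 : ℤ)

/-- Mirror state-sum weight (for the orientation-reversed 2-twist spun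
trefoil). -/
def weight' (y : ZMod 3 × ZMod 3) : Multiplicative (ZMod 3) :=
  (theta y.2 (r3op y.1 y.2) y.1)⁻¹ * (theta y.2 y.1 y.2)⁻¹ *
    (theta y.1 y.2 (r3op y.1 y.2))⁻¹ * theta (r3op y.1 y.2) y.2 y.1 *
    theta y.2 (r3op y.1 y.2) y.2 * theta (r3op y.1 y.2) y.1 y.2

/-- The mirror state-sum `Φ'(θ)`, summed over all pairs `(y₁,y₂) ∈ R₃²`. -/
noncomputable def stateSum' : MonoidAlgebra ℤ (Multiplicative (ZMod 3)) :=
  ∑ y : ZMod 3 × ZMod 3, MonoidAlgebra.single (weight' y) (1 : ℤ)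

/-!
The quandle `R₃` is involutory, `(y₁ * y₂) * y₁ = y₂`, so every pair `(y₁, y₂)` is a colouring and
both state-sums run over all of `R₃²`. Evaluating `θ` shows that the three trivial colourings have
weight `1`, while the six others have weight `t` in `Φ` and `t²` in `Φ'`. Hence `Φ = 3 + 6t` and
`Φ' = 3 + 6t²`, which differ because `t ≠ t²`.
-/

open MonoidAlgebra

theorem MonoidAlgebra.sum_single_ite_diag {α k G : Type*} [Fintype α] [DecidableEq α]
    [Semiring k] [Monoid G] (g : G) :
    ∑ y : α × α, single (if y.1 = y.2 then 1 else g) (1 : k) =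
      (Fintype.card α : MonoidAlgebra k G) +
        single g ((Fintype.card α * Fintype.card α - Fintype.card α : ℕ) : k) := by
  have hdiag : (Finset.univ.filter fun y : α × α => y.1 = y.2) = Finset.univ.diag := by
    rw [Finset.diag_eq_filter, Finset.univ_product_univ]
  have hoff : (Finset.univ.filter fun y : α × α => ¬y.1 = y.2) = Finset.univ.offDiag := by
    ext; simp
  simp only [apply_ite (single · (1 : k))]
  rw [Finset.sum_ite, hdiag, hoff, Finset.sum_const, Finset.sum_const, Finset.diag_card,
    Finset.offDiag_card, Finset.card_univ, natCast_def, smul_single, smul_single,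
    nsmul_one, nsmul_one]

theorem r3op_r3op_left (a b : ZMod 3) : r3op (r3op a b) a = b := by
  have h3 : (3 : ZMod 3) = 0 := rfl
  unfold r3op
  linear_combination (a - b) * h3

theorem r3op_r3op_right (a b : ZMod 3) : r3op (r3op a b) b = a := by
  unfold r3op
  ring

theorem weight_eq (y : ZMod 3 × ZMod 3) :
    weight y = if y.1 = y.2 then 1 else Multiplicative.ofAdd 1 := by
  revert y; decide

theorem weight'_eq (y : ZMod 3 × ZMod 3) :
    weight' y = if y.1 = y.2 then 1 else Multiplicative.ofAdd 2 := by
  revert y; decide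

theorem stateSum_eq : stateSum = 3 + single (Multiplicative.ofAdd (1 : ZMod 3)) (6 : ℤ) := by
  have hcol : (Finset.univ.filter fun y : ZMod 3 × ZMod 3 =>
      y.2 = r3op (r3op y.1 y.2) y.1 ∧ y.2 = r3op (r3op y.2 y.1) y.1) = Finset.univ :=
    Finset.filter_true_of_mem fun y _ => ⟨(r3op_r3op_left _ _).symm, (r3op_r3op_right _ _).symm⟩
  simp only [stateSum, hcol, weight_eq, sum_single_ite_diag, ZMod.card]
  norm_num

theorem stateSum'_eq : stateSum' = 3 + single (Multiplicative.ofAdd (2 : ZMod 3)) (6 : ℤ) := by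
  simp only [stateSum', weight'_eq, sum_single_ite_diag, ZMod.card]
  norm_num

/-- The mirror state-sum equals `3 + 6t²`, and in particular
`Φ(θ) = 3 + 6t ≠ 3 + 6t² = Φ'(θ)` in `ℤ[t]/(t³−1)`: the algebraic content of
the non-invertibility of the 2-twist spun trefoil. -/
theorem stateSum_mirror :
    stateSum' = 3 + MonoidAlgebra.single
        (Multiplicative.ofAdd (2 : ZMod 3)) (6 : ℤ) ∧
    stateSum ≠ stateSum' := by
  refine ⟨stateSum'_eq, fun h => ?_⟩
  rw [stateSum_eq, stateSum'_eq] at h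
  have ht := add_left_cancel h
  rw [single_inj] at ht
  revert ht
  decide
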